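/- arXiv:1708.00043 — 3 statements merged into one kernel-verified Lean document; each statement's English description precedes it below -/
import Mathlib

section
/- Let jobs be indexed by a finite set J, where each job j has an interval I_j ⊆ T (T a finite totally ordered set of items), a value v_j > 0, and a fractional allocation x_j ≥ 0. Define the density d_j = v_j / |I_j|, and for each item t the fractional value f_t = Σ_{j : t ∈ I_j} d_j x_j. Suppose x is feasible in the sense that Σ_{j : t ∈ I_j} x_j ≤ 1 for every item t. Let U₁ = { j : v_j ≥ (1/2) Σ_{t ∈ I_j} f_t }. Then Σ_{j ∈ U₁} v_j x_j ≥ (1/2) Σ_j v_j x_j. -/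
open Classical in
/-- Filtering low value jobs retains half of the fractional value. -/
theorem stmt0 {J T : Type*} [Fintype J] [Fintype T] [LinearOrder T]
    (I : J → Finset T) (v x : J → ℝ)
    (hI : ∀ j, (I j).Nonempty)
    (hint : ∀ j, ∀ a b c : T, a ∈ I j → c ∈ I j → a ≤ b → b ≤ c → b ∈ I j)
    (hv : ∀ j, 0 < v j) (hx : ∀ j, 0 ≤ x j)
    (hfeas : ∀ t, ∑ j ∈ Finset.univ.filter (fun j => t ∈ I j), x j ≤ 1) :
    (∑ j ∈ Finset.univ.filter
        (fun j => (1/2) * (∑ t ∈ I j,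
          ∑ j' ∈ Finset.univ.filter (fun j' => t ∈ I j'),
            (v j' / (I j').card) * x j') ≤ v j),
      v j * x j)
      ≥ (1/2) * ∑ j, v j * x j := by
  set F : T → ℝ := fun t => ∑ j' ∈ Finset.univ.filter (fun j' => t ∈ I j'),
      (v j' / (I j').card) * x j' with hF
  have hcard : ∀ j, (0:ℝ) < (I j).card := fun j => by
    exact_mod_cast Finset.card_pos.mpr (hI j)
  have hF0 : ∀ t, 0 ≤ F t := by
    intro t
    exact Finset.sum_nonneg fun j _ => mul_nonneg (div_nonneg (hv j).le (hcard j).le) (hx j)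
  -- total identity
  have htot : ∑ t, F t = ∑ j, v j * x j := by
    have h1 : ∑ t, F t = ∑ j, ∑ t, if t ∈ I j then (v j / (I j).card) * x j else 0 := by
      rw [Finset.sum_comm]
      refine Finset.sum_congr rfl fun t _ => ?_
      simp only [hF, Finset.sum_filter]
    rw [h1]
    refine Finset.sum_congr rfl fun j _ => ?_
    rw [Finset.sum_ite_mem, Finset.univ_inter, Finset.sum_const, nsmul_eq_mul]
    field_simp
  set p : J → Prop := fun j => (1/2) * (∑ t ∈ I j, F t) ≤ v j with hp
  have hsplit := Finset.sum_filter_add_sum_filter_not Finset.univ p (fun j => v j * x j)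
  have hUc : ∑ j ∈ Finset.univ.filter (fun j => ¬ p j), v j * x j
      ≤ (1/2) * ∑ j, v j * x j := by
    have step1 : ∑ j ∈ Finset.univ.filter (fun j => ¬ p j), v j * x j
        ≤ ∑ j ∈ Finset.univ.filter (fun j => ¬ p j),
            (1/2) * ((∑ t ∈ I j, F t) * x j) := by
      refine Finset.sum_le_sum fun j hj => ?_
      have hj' : ¬ p j := (Finset.mem_filter.mp hj).2
      have hlt := le_of_lt (lt_of_not_ge hj')
      calc v j * x j ≤ ((1/2) * (∑ t ∈ I j, F t)) * x j :=
            mul_le_mul_of_nonneg_right hlt (hx j)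
        _ = (1/2) * ((∑ t ∈ I j, F t) * x j) := by ring
    have step2 : ∑ j ∈ Finset.univ.filter (fun j => ¬ p j),
            (∑ t ∈ I j, F t) * x j
        = ∑ t, ∑ j ∈ Finset.univ.filter (fun j => ¬ p j),
            (if t ∈ I j then F t * x j else 0) := by
      rw [Finset.sum_comm]
      refine Finset.sum_congr rfl fun j _ => ?_
      rw [Finset.sum_ite_mem, Finset.univ_inter, Finset.sum_mul]
    have step3 : ∀ t, ∑ j ∈ Finset.univ.filter (fun j => ¬ p j),
        (if t ∈ I j then F t * x j else 0) ≤ F t := by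
      intro t
      have h1 : F t * ∑ j ∈ (Finset.univ.filter (fun j => ¬ p j)).filter (fun j => t ∈ I j),
              x j
          = ∑ j ∈ Finset.univ.filter (fun j => ¬ p j),
          (if t ∈ I j then F t * x j else 0) := by
        rw [Finset.mul_sum, Finset.sum_filter]
      rw [← h1]
      have h2 : ∑ j ∈ (Finset.univ.filter (fun j => ¬ p j)).filter (fun j => t ∈ I j), x j
          ≤ ∑ j ∈ Finset.univ.filter (fun j => t ∈ I j), x j := by
        refine Finset.sum_le_sum_of_subset_of_nonneg ?_ (fun j _ _ => hx j)
        intro j hj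
        simp only [Finset.mem_filter] at hj ⊢
        exact ⟨hj.1.1, hj.2⟩
      have h3 := le_trans h2 (hfeas t)
      calc F t * _ ≤ F t * 1 := mul_le_mul_of_nonneg_left h3 (hF0 t)
        _ = F t := mul_one _
    calc ∑ j ∈ Finset.univ.filter (fun j => ¬ p j), v j * x j
        ≤ ∑ j ∈ Finset.univ.filter (fun j => ¬ p j),
            (1/2) * ((∑ t ∈ I j, F t) * x j) := step1
      _ = (1/2) * ∑ j ∈ Finset.univ.filter (fun j => ¬ p j),
            (∑ t ∈ I j, F t) * x j := by rw [Finset.mul_sum]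
      _ = (1/2) * ∑ t, ∑ j ∈ Finset.univ.filter (fun j => ¬ p j),
            (if t ∈ I j then F t * x j else 0) := by rw [step2]
      _ ≤ (1/2) * ∑ t, F t := by
          have := Finset.sum_le_sum (fun t (_ : t ∈ Finset.univ) => step3 t)
          linarith
      _ = (1/2) * ∑ j, v j * x j := by rw [htot]
  have := hsplit
  linarith
end

section
/- Let a finite set of jobs be partitioned into value classes G_1, ..., G_m where every job in class a has value in (2^{a-1}, 2^a], and suppose each class G_a has total fractional weight W_a := Σ_{j∈G_a} x_j ≤ 1/(2β) for some β ≥ 1. Let G = ⋃_a G_a and V = Σ_{j∈G} v_j x_j. Then there exists a subset S ⊆ G which is a union of some of the classes G_a, such that Σ_{j∈S} x_j ≤ 1/β and Σ_{j∈S} v_j x_j ≥ V/6. -/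
/-- From geometric value classes of small weight one can select a union of
classes with weight at most 1/β capturing at least a sixth of the fractional value. -/
theorem stmt3 {ι : Type*} [DecidableEq ι] (m : ℕ) (G : Fin m → Finset ι)
    (v x : ι → ℝ) (β : ℝ) (hβ : 1 ≤ β)
    (hdisj : ∀ a b, a ≠ b → Disjoint (G a) (G b))
    (hval : ∀ a, ∀ j ∈ G a, (2:ℝ)^(a:ℕ) < v j ∧ v j ≤ 2^((a:ℕ)+1))
    (hx : ∀ j, 0 ≤ x j)
    (hW : ∀ a, ∑ j ∈ G a, x j ≤ 1/(2*β)) :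
    ∃ A : Finset (Fin m),
      (∑ j ∈ A.biUnion G, x j ≤ 1/β) ∧
      (∑ j ∈ A.biUnion G, v j * x j
        ≥ (∑ j ∈ (Finset.univ : Finset (Fin m)).biUnion G, v j * x j) / 6) := by
  classical
  have hβ0 : (0:ℝ) < β := lt_of_lt_of_le one_pos hβ
  set W : Fin m → ℝ := fun a => ∑ j ∈ G a, x j with hWdef
  set Va : Fin m → ℝ := fun a => ∑ j ∈ G a, v j * x j with hVadef
  have hWnn : ∀ a, 0 ≤ W a := fun a => Finset.sum_nonneg fun j _ => hx j
  have hVnn : ∀ a, 0 ≤ Va a := fun a => Finset.sum_nonneg fun j hj =>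
    mul_nonneg (le_of_lt (lt_trans (by positivity) (hval a j hj).1)) (hx j)
  have hVlow : ∀ a : Fin m, (2:ℝ)^(a:ℕ) * W a ≤ Va a := by
    intro a
    rw [hWdef]
    simp only
    rw [Finset.mul_sum]
    exact Finset.sum_le_sum fun j hj =>
      mul_le_mul_of_nonneg_right (le_of_lt (hval a j hj).1) (hx j)
  have hVhigh : ∀ a : Fin m, Va a ≤ (2:ℝ)^((a:ℕ)+1) * W a := by
    intro a
    rw [hWdef]
    simp only
    rw [Finset.mul_sum]
    exact Finset.sum_le_sum fun j hj =>
      mul_le_mul_of_nonneg_right (hval a j hj).2 (hx j)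
  -- sums over biUnion
  have hsum : ∀ (A : Finset (Fin m)) (f : ι → ℝ),
      ∑ j ∈ A.biUnion G, f j = ∑ a ∈ A, ∑ j ∈ G a, f j := by
    intro A f
    exact Finset.sum_biUnion (fun a _ b _ hab => hdisj a b hab)
  -- candidate sets
  set Aset : ℕ → Finset (Fin m) := fun t => Finset.univ.filter (fun a => t ≤ (a:ℕ))
    with hAdef
  have hex : ∃ t, ∑ a ∈ Aset t, W a ≤ 1/β := by
    refine ⟨m, ?_⟩
    have : Aset m = ∅ := by
      ext a; simp [hAdef]
    rw [this, Finset.sum_empty]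
    positivity
  set t := Nat.find hex with htdef
  have ht : ∑ a ∈ Aset t, W a ≤ 1/β := Nat.find_spec hex
  refine ⟨Aset t, ?_, ?_⟩
  · rw [hsum]; exact ht
  · rw [hsum, hsum]
    -- total value
    have hsplit : ∑ a ∈ (Finset.univ : Finset (Fin m)), Va a
        = (∑ a ∈ Aset t, Va a) + ∑ a ∈ Finset.univ.filter (fun a : Fin m => ¬ t ≤ (a:ℕ)), Va a := by
      rw [hAdef]
      exact (Finset.sum_filter_add_sum_filter_not _ _ _).symm
    have hVtot_nn : 0 ≤ ∑ a ∈ (Finset.univ : Finset (Fin m)), Va a :=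
      Finset.sum_nonneg fun a _ => hVnn a
    rcases Nat.eq_zero_or_pos t with ht0 | htpos
    · have : Aset t = Finset.univ := by
        ext a; simp [hAdef, ht0]
      rw [this]
      linarith
    · obtain ⟨k, hk⟩ : ∃ k, t = k + 1 := ⟨t - 1, by omega⟩
      have hkmin : ¬ ∑ a ∈ Aset k, W a ≤ 1/β := Nat.find_min hex (by omega)
      push_neg at hkmin
      -- Aset k = Aset t ∪ {val = k}
      have hAsplit : ∑ a ∈ Aset k, W a
          = (∑ a ∈ Aset t, W a) + ∑ a ∈ Finset.univ.filter (fun a : Fin m => (a:ℕ) = k), W a := by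
        have hun : Aset k = Aset t ∪ Finset.univ.filter (fun a : Fin m => (a:ℕ) = k) := by
          ext a; simp [hAdef, hk]; omega
        rw [hun, Finset.sum_union]
        rw [Finset.disjoint_filter]
        intro a ha h2
        simp [hAdef, hk] at ha
        omega
      have hWk : ∑ a ∈ Finset.univ.filter (fun a : Fin m => (a:ℕ) = k), W a ≤ 1/(2*β) := by
        by_cases hkm : k < m
        · have : Finset.univ.filter (fun a : Fin m => (a:ℕ) = k) = {(⟨k, hkm⟩ : Fin m)} := by
            ext a
            simp [Fin.ext_iff]
          rw [this, Finset.sum_singleton]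
          exact hW _
        · have : Finset.univ.filter (fun a : Fin m => (a:ℕ) = k) = ∅ := by
            ext a
            simp
            omega
          rw [this]
          simp
          positivity
      -- chosen weight is large
      have hSt : 1/(2*β) < ∑ a ∈ Aset t, W a := by
        have h2 : 1/β - 1/(2*β) = 1/(2*β) := by field_simp; ring
        linarith
      -- chosen value is large
      have hSA : (2:ℝ)^t * (∑ a ∈ Aset t, W a) ≤ ∑ a ∈ Aset t, Va a := by
        rw [Finset.mul_sum]
        refine Finset.sum_le_sum fun a ha => ?_
        refine le_trans ?_ (hVlow a)
        have hta : t ≤ (a:ℕ) := by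
          simp [hAdef] at ha; exact ha
        exact mul_le_mul_of_nonneg_right (pow_le_pow_right₀ one_le_two hta) (hWnn a)
      -- complement value is small
      have hcomp : ∑ a ∈ Finset.univ.filter (fun a : Fin m => ¬ t ≤ (a:ℕ)), Va a
          ≤ (2:ℝ)^t / β := by
        have h1 : ∑ a ∈ Finset.univ.filter (fun a : Fin m => ¬ t ≤ (a:ℕ)), Va a
            ≤ ∑ a ∈ Finset.univ.filter (fun a : Fin m => ¬ t ≤ (a:ℕ)), (2:ℝ)^(a:ℕ) / β := by
          refine Finset.sum_le_sum fun a _ => ?_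
          refine le_trans (hVhigh a) ?_
          calc (2:ℝ)^((a:ℕ)+1) * W a ≤ (2:ℝ)^((a:ℕ)+1) * (1/(2*β)) :=
                mul_le_mul_of_nonneg_left (hW a) (by positivity)
            _ = (2:ℝ)^(a:ℕ) / β := by rw [pow_succ]; field_simp
        refine le_trans h1 ?_
        rw [← Finset.sum_div]
        have h2 : ∑ a ∈ Finset.univ.filter (fun a : Fin m => ¬ t ≤ (a:ℕ)), (2:ℝ)^(a:ℕ)
            ≤ ∑ i ∈ Finset.range t, (2:ℝ)^i := by
          have himg : (∑ i ∈ (Finset.univ.filter (fun a : Fin m => ¬ t ≤ (a:ℕ))).image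
              Fin.val, (2:ℝ)^i)
              = ∑ a ∈ Finset.univ.filter (fun a : Fin m => ¬ t ≤ (a:ℕ)), (2:ℝ)^(a:ℕ) :=
            Finset.sum_image (fun a _ b _ h => Fin.val_injective h)
          rw [← himg]
          refine Finset.sum_le_sum_of_subset_of_nonneg ?_ (fun i _ _ => by positivity)
          intro i hi
          simp at hi ⊢
          obtain ⟨a, ha, rfl⟩ := hi
          omega
        have h3 : ∑ i ∈ Finset.range t, (2:ℝ)^i = 2^t - 1 := by
          rw [geom_sum_eq (by norm_num : (2:ℝ) ≠ 1) t]
          norm_num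
        have h4 : ∑ a ∈ Finset.univ.filter (fun a : Fin m => ¬ t ≤ (a:ℕ)), (2:ℝ)^(a:ℕ)
            ≤ (2:ℝ)^t := by
          rw [h3] at h2
          linarith
        gcongr
      -- put it all together
      have hpow : (0:ℝ) < 2^t := by positivity
      have hbig : (2:ℝ)^t / β < 2 * ∑ a ∈ Aset t, Va a := by
        have h5 : (2:ℝ)^t * (1/(2*β)) < 2^t * (∑ a ∈ Aset t, W a) :=
          mul_lt_mul_of_pos_left hSt hpow
        have h6 : (2:ℝ)^t * (1/(2*β)) = (2:ℝ)^t / β / 2 := by field_simp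
        linarith
      linarith
end

section
/- Let y be a fractional allocation of arms in a rooted tree, and suppose we recursively extract pairs of arm sets (J_k, D_k) with sibling sets D'_k such that for every k, FracWt(y, J_k) ≥ 2·FracWt(y, D_k) and the sets J_k (after removing arms later dropped) together with all D_k ∪ D'_k partition the support of y. If A_k = J_k \ (⋃_{k'} D'_{k'}) and each arm in D'_k has weight equal to its sibling in D_k, then FracWt(y, ⋃_k A_k) ≥ (1/3)·FracWt(y). -/
/-- The counting argument finishing the layered-tree theorem: the surviving
arms ⋃_k A_k, with A_k = J_k minus all dropped sibling sets, retain a third of the weight. -/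
theorem stmt13 {ι : Type*} [Fintype ι] [DecidableEq ι] (K : ℕ)
    (y : ι → ℝ) (hy : ∀ j, 0 ≤ y j)
    (J D D' : Fin K → Finset ι)
    (hsib : ∀ k, ∑ j ∈ D' k, y j = ∑ j ∈ D k, y j)
    (hJD : ∀ k, 2 * ∑ j ∈ D k, y j ≤ ∑ j ∈ J k, y j)
    (hJdisj : ∀ k k', k ≠ k' → Disjoint (J k) (J k'))
    (hDdisj : ∀ k k', k ≠ k' → Disjoint (D k ∪ D' k) (D k' ∪ D' k'))
    (hDD' : ∀ k, Disjoint (D k) (D' k))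
    (hJDk : ∀ k, Disjoint (J k) (D k ∪ D' k))
    (hcover : ∀ j, y j ≠ 0 → (∃ k, j ∈ J k) ∨ (∃ k, j ∈ D k ∪ D' k)) :
    (1/3) * ∑ j, y j ≤
      ∑ j ∈ Finset.univ.biUnion
        (fun k : Fin K => (J k) \ (Finset.univ.biUnion (fun k' : Fin K => D' k'))), y j := by
  classical
  set V : Finset ι := Finset.univ.biUnion D' with hV
  set A : Finset ι := Finset.univ.biUnion (fun k : Fin K => (J k) \ V) with hA
  set U : Finset ι := Finset.univ.biUnion J with hU
  set B : Finset ι := Finset.univ.biUnion (fun k : Fin K => D k ∪ D' k) with hB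
  have hAeq : A = U \ V := by
    ext j
    simp only [hA, hU, Finset.mem_biUnion, Finset.mem_sdiff, Finset.mem_univ, true_and]
    tauto
  set TD : ℝ := ∑ k, ∑ j ∈ D k, y j with hTD
  have sumnn : ∀ s : Finset ι, 0 ≤ ∑ j ∈ s, y j := fun s => Finset.sum_nonneg fun j _ => hy j
  -- total sum = sum over A ∪ B
  have h1 : ∑ j, y j = ∑ j ∈ A ∪ B, y j := by
    refine (Finset.sum_subset (Finset.subset_univ _) ?_).symm
    intro j _ hj
    by_contra hne
    rcases hcover j hne with ⟨k, hk⟩ | ⟨k, hk⟩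
    · apply hj
      rw [Finset.mem_union]
      by_cases hjV : j ∈ V
      · right
        rw [hV, Finset.mem_biUnion] at hjV
        obtain ⟨k', _, hk'⟩ := hjV
        exact Finset.mem_biUnion.2 ⟨k', Finset.mem_univ _, Finset.mem_union_right _ hk'⟩
      · left
        exact Finset.mem_biUnion.2 ⟨k, Finset.mem_univ _, Finset.mem_sdiff.2 ⟨hk, hjV⟩⟩
    · exact hj (Finset.mem_union_right _ (Finset.mem_biUnion.2 ⟨k, Finset.mem_univ _, hk⟩))
  have h2 : ∑ j ∈ A ∪ B, y j ≤ ∑ j ∈ A, y j + ∑ j ∈ B, y j := by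
    have := Finset.sum_union_inter (s₁ := A) (s₂ := B) (f := y)
    have h0 := sumnn (A ∩ B)
    linarith
  have h3 : ∑ j ∈ B, y j = 2 * TD := by
    rw [hB, Finset.sum_biUnion]
    · rw [hTD, two_mul, ← Finset.sum_add_distrib]
      refine Finset.sum_congr rfl fun k _ => ?_
      rw [Finset.sum_union (hDD' k), hsib k]
    · intro k _ k' _ hkk'
      exact hDdisj k k' hkk'
  have h4 : ∑ j ∈ U, y j = ∑ k, ∑ j ∈ J k, y j := by
    rw [hU, Finset.sum_biUnion]
    intro k _ k' _ hkk'
    exact hJdisj k k' hkk'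
  have h5 : 2 * TD ≤ ∑ j ∈ U, y j := by
    rw [h4, hTD, Finset.mul_sum]
    exact Finset.sum_le_sum fun k _ => hJD k
  have h7 : ∑ j ∈ V, y j ≤ TD := by
    rw [hV, hTD]
    rw [Finset.sum_biUnion]
    · exact le_of_eq (Finset.sum_congr rfl fun k _ => hsib k)
    · intro k _ k' _ hkk'
      exact (hDdisj k k' hkk').mono Finset.subset_union_right Finset.subset_union_right
  have h6 : ∑ j ∈ U, y j ≤ ∑ j ∈ A, y j + ∑ j ∈ V, y j := by
    have hsplit : ∑ j ∈ U \ V, y j + ∑ j ∈ U ∩ V, y j = ∑ j ∈ U, y j := by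
      rw [← Finset.sum_union (Finset.disjoint_sdiff_inter U V), Finset.sdiff_union_inter]
    have hIV : ∑ j ∈ U ∩ V, y j ≤ ∑ j ∈ V, y j :=
      Finset.sum_le_sum_of_subset_of_nonneg (Finset.inter_subset_right) fun j _ _ => hy j
    rw [hAeq]
    linarith
  have hTDA : TD ≤ ∑ j ∈ A, y j := by linarith
  linarith
end
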